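/- For every integer k ≥ 2, Σ_{j=1}^{k−1} j·θ_j = 1 − k·e_k(1)^{−1}·∫₀¹ e_k(y) dy; equivalently, 2·∫₀¹ (1−y)·(y + 2y² + … + (k−1)·y^{k−1})·e_k(y) dy = e_k(1) − k·∫₀¹ e_k(y) dy. -/

import Mathlib

/-!
Since `e_k' = 2(1 + y + … + y^{k-2}) e_k`, the function `(k y - (k-1) y²) e_k(y)`, which vanishes
at `0` and equals `e_k(1)` at `1`, is a primitive of `(2(1-y)(y + 2y² + … + (k-1)y^{k-1}) + k) e_k(y)`.
Integrating over `[0, 1]` gives the second identity; the first one is the second divided by `e_k(1)`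
after exchanging the sum over `j` with the integral in the definition of `θ_j`.
-/

open MeasureTheory Filter Finset
open scoped Topology RealInnerProductSpace

noncomputable section

/-- `e_k(y) = exp(2(y + y²/2 + … + y^{k-1}/(k-1)))`. -/
def ek (k : ℕ) (y : ℝ) : ℝ :=
  Real.exp (2 * ∑ i ∈ Finset.range (k - 1), y ^ (i + 1) / (i + 1))

/-- `θ_j = 2 e_k(1)⁻¹ ∫₀¹ (1-y) y^j e_k(y) dy`. -/
def theta (k j : ℕ) : ℝ :=
  2 * (ek k 1)⁻¹ * ∫ y in (0:ℝ)..1, (1 - y) * y ^ j * ek k y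

theorem hasDerivAt_ek (k : ℕ) (y : ℝ) :
    HasDerivAt (ek k) ((2 * ∑ i ∈ range (k - 1), y ^ i) * ek k y) y := by
  have hpoly : HasDerivAt (fun y : ℝ => 2 * ∑ i ∈ range (k - 1), y ^ (i + 1) / (i + 1))
      (2 * ∑ i ∈ range (k - 1), y ^ i) y := by
    refine (HasDerivAt.fun_sum fun i _ => ?_).const_mul 2
    refine ((hasDerivAt_pow (i + 1) y).div_const ((i : ℝ) + 1)).congr_deriv ?_
    rw [Nat.add_sub_cancel]
    push_cast
    field_simp
  exact hpoly.exp.congr_deriv (mul_comm _ _)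

@[fun_prop]
theorem continuous_ek (k : ℕ) : Continuous (ek k) := by
  unfold ek
  fun_prop

theorem add_mul_two_mul_geom_sum_eq {R : Type*} [CommRing R] (k : ℕ) (hk : 1 ≤ k) (y : R) :
    ((k : R) - 2 * ((k : R) - 1) * y) + ((k : R) * y - ((k : R) - 1) * y ^ 2) *
        (2 * ∑ i ∈ range (k - 1), y ^ i)
      = 2 * (1 - y) * (∑ j ∈ Ico 1 k, (j : R) * y ^ j) + k := by
  induction k, hk using Nat.le_induction with
  | base => simp
  | succ n hn ih =>
    obtain ⟨m, rfl⟩ : ∃ m, n = m + 1 := ⟨n - 1, by omega⟩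
    rw [Nat.add_sub_cancel, sum_range_succ, sum_Ico_succ_top hn]
    rw [Nat.add_sub_cancel] at ih
    have hgeom : (∑ i ∈ range m, y ^ i) * (y - 1) = y ^ m - 1 := geom_sum_mul y m
    push_cast at ih ⊢
    linear_combination ih - 2 * y * hgeom

theorem hasDerivAt_primitive_ek (k : ℕ) (hk : 1 ≤ k) (y : ℝ) :
    HasDerivAt (fun y : ℝ => ((k : ℝ) * y - ((k : ℝ) - 1) * y ^ 2) * ek k y)
      ((2 * (1 - y) * (∑ j ∈ Ico 1 k, (j : ℝ) * y ^ j) + k) * ek k y) y := by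
  have hquad : HasDerivAt (fun y : ℝ => (k : ℝ) * y - ((k : ℝ) - 1) * y ^ 2)
      ((k : ℝ) - 2 * ((k : ℝ) - 1) * y) y := by
    refine (((hasDerivAt_id y).const_mul (k : ℝ)).sub
      ((hasDerivAt_pow 2 y).const_mul ((k : ℝ) - 1))).congr_deriv ?_
    ring
  refine (hquad.mul (hasDerivAt_ek k y)).congr_deriv ?_
  rw [← add_mul_two_mul_geom_sum_eq k hk y]
  ring

theorem two_mul_integral_one_sub_mul_sum_mul_ek (k : ℕ) (hk : 1 ≤ k) :
    2 * ∫ y in (0:ℝ)..1, (1 - y) * (∑ j ∈ Ico 1 k, (j : ℝ) * y ^ j) * ek k y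
      = ek k 1 - k * ∫ y in (0:ℝ)..1, ek k y := by
  have hftc := intervalIntegral.integral_eq_sub_of_hasDerivAt
    (fun y _ => hasDerivAt_primitive_ek k hk y) (Continuous.intervalIntegrable (by fun_prop) 0 1)
  rw [← intervalIntegral.integral_const_mul, ← intervalIntegral.integral_const_mul,
    eq_sub_iff_add_eq, ← intervalIntegral.integral_add
      (Continuous.intervalIntegrable (by fun_prop) 0 1)
      (Continuous.intervalIntegrable (by fun_prop) 0 1)]
  convert hftc using 1
  · congr 1
    ext y
    ring
  · simp

theorem sum_mul_theta (k : ℕ) :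
    ∑ j ∈ Ico 1 k, (j : ℝ) * theta k j
      = 2 * (ek k 1)⁻¹ * ∫ y in (0:ℝ)..1, (1 - y) * (∑ j ∈ Ico 1 k, (j : ℝ) * y ^ j) * ek k y := by
  have hswap : ∫ y in (0:ℝ)..1, (1 - y) * (∑ j ∈ Ico 1 k, (j : ℝ) * y ^ j) * ek k y
      = ∑ j ∈ Ico 1 k, (j : ℝ) * ∫ y in (0:ℝ)..1, (1 - y) * y ^ j * ek k y := by
    simp_rw [← intervalIntegral.integral_const_mul]
    rw [← intervalIntegral.integral_finsetSum
      fun j _ => Continuous.intervalIntegrable (by fun_prop) 0 1]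
    congr 1
    ext y
    rw [mul_sum, sum_mul]
    exact sum_congr rfl fun j _ => by ring
  rw [hswap, mul_sum]
  exact sum_congr rfl fun j _ => by unfold theta; ring

/-- **(4.6).** `Σ_{j=1}^{k-1} j θ_j = 1 - k e_k(1)⁻¹ ∫₀¹ e_k(y) dy`; equivalently,
`2 ∫₀¹ (1-y)(y + 2y² + … + (k-1) y^{k-1}) e_k(y) dy = e_k(1) - k ∫₀¹ e_k(y) dy`. -/
theorem sum_j_theta_eq
    (k : ℕ) (hk : 2 ≤ k) :
    (∑ j ∈ Finset.Ico 1 k, (j : ℝ) * theta k j)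
        = 1 - (k : ℝ) * (ek k 1)⁻¹ * ∫ y in (0:ℝ)..1, ek k y ∧
    (2 * ∫ y in (0:ℝ)..1, (1 - y) * (∑ j ∈ Finset.Ico 1 k, (j : ℝ) * y ^ j) * ek k y)
        = ek k 1 - (k : ℝ) * ∫ y in (0:ℝ)..1, ek k y := by
  have hint := two_mul_integral_one_sub_mul_sum_mul_ek k (by omega)
  refine ⟨?_, hint⟩
  have hek : ek k 1 ≠ 0 := Real.exp_ne_zero _
  rw [sum_mul_theta, mul_comm 2, mul_assoc, hint]
  field_simp

end
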